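/- arXiv:1203.1935 — 4 statements merged into one kernel-verified Lean document; each statement's English description precedes it below -/
import Mathlib

section
/- For every real number ξ not in 2πℤ and every natural number n ≥ 1, the tail series ∑_{k=n}^∞ e^{ikξ}/k converges and satisfies |∑_{k=n}^∞ e^{ikξ}/k| ≤ 1/(n |sin(ξ/2)|). -/
/-!
With `z = e^{iξ}` the terms are `z^k / k`. The geometric block sums `∑_{k=a}^b z^k` are bounded
by `2 / |z - 1| = 1 / |sin(ξ/2)|`, and Abel summation against the decreasing weights `1/k` turns
this into the bound `1 / (a |sin(ξ/2)|)` for every block `∑_{k=a}^b z^k / k`. These bounds make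
the partial sums Cauchy and bound the limit.
-/

open Filter Topology Finset

theorem norm_sum_Icc_pow_le {K : Type*} [NormedField K] {z : K} (hz : ‖z‖ ≤ 1) (hz1 : z ≠ 1)
    (a b : ℕ) : ‖∑ k ∈ Icc a b, z ^ k‖ ≤ 2 / ‖z - 1‖ := by
  rcases lt_or_ge b a with hba | hab
  · simp only [Icc_eq_empty_of_lt hba, sum_empty, norm_zero]
    positivity
  rw [← Ico_add_one_right_eq_Icc, geom_sum_Ico hz1 (by omega), norm_div]
  gcongr
  calc ‖z ^ (b + 1) - z ^ a‖ ≤ ‖z‖ ^ (b + 1) + ‖z‖ ^ a := by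
        simpa only [norm_pow] using norm_sub_le (z ^ (b + 1)) (z ^ a)
    _ ≤ 1 + 1 := by gcongr <;> exact pow_le_one₀ (norm_nonneg z) hz
    _ = 2 := by norm_num

section Abel

variable {E : Type*} [SeminormedAddCommGroup E] [NormedSpace ℝ E] {f : ℕ → E} {w : ℕ → ℝ}
  {M : ℝ} {a b : ℕ}

theorem norm_sum_Icc_smul_sub_le (hab : a ≤ b) (hw : AntitoneOn w (Set.Icc a b))
    (hf : ∀ j ∈ Icc a b, ‖∑ k ∈ Icc a j, f k‖ ≤ M) :
    ‖∑ k ∈ Icc a b, w k • f k - w b • ∑ k ∈ Icc a b, f k‖ ≤ (w a - w b) * M := by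
  induction b, hab using Nat.le_induction with
  | base => simp
  | succ b hab ih =>
    have hwb : w (b + 1) ≤ w b :=
      hw ⟨hab, by omega⟩ ⟨by omega, le_rfl⟩ (Nat.le_succ b)
    have hF : ‖∑ k ∈ Icc a b, f k‖ ≤ M := hf b (mem_Icc.2 ⟨hab, by omega⟩)
    have ih' := ih (hw.mono (Set.Icc_subset_Icc_right (Nat.le_succ b)))
      fun j hj => hf j (Icc_subset_Icc_right (Nat.le_succ b) hj)
    rw [sum_Icc_succ_top (by omega), sum_Icc_succ_top (by omega)]
    calc _ = ‖(∑ k ∈ Icc a b, w k • f k - w b • ∑ k ∈ Icc a b, f k)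
            + (w b - w (b + 1)) • ∑ k ∈ Icc a b, f k‖ := by
          congr 1
          simp only [smul_add, sub_smul]
          abel
      _ ≤ (w a - w b) * M + (w b - w (b + 1)) * M := by
          refine norm_add_le_of_le ih' ?_
          rw [norm_smul, Real.norm_of_nonneg (sub_nonneg.2 hwb)]
          exact mul_le_mul_of_nonneg_left hF (sub_nonneg.2 hwb)
      _ = (w a - w (b + 1)) * M := by ring

/-- **Abel's inequality.** -/
theorem norm_sum_Icc_smul_le (hab : a ≤ b) (hw : AntitoneOn w (Set.Icc a b)) (hwb : 0 ≤ w b)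
    (hf : ∀ j ∈ Icc a b, ‖∑ k ∈ Icc a j, f k‖ ≤ M) :
    ‖∑ k ∈ Icc a b, w k • f k‖ ≤ w a * M := by
  have hFb : ‖w b • ∑ k ∈ Icc a b, f k‖ ≤ w b * M := by
    rw [norm_smul, Real.norm_of_nonneg hwb]
    exact mul_le_mul_of_nonneg_left (hf b (right_mem_Icc.2 hab)) hwb
  calc ‖∑ k ∈ Icc a b, w k • f k‖
        = ‖(∑ k ∈ Icc a b, w k • f k - w b • ∑ k ∈ Icc a b, f k)
            + w b • ∑ k ∈ Icc a b, f k‖ := by rw [sub_add_cancel]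
    _ ≤ (w a - w b) * M + w b * M :=
        norm_add_le_of_le (norm_sum_Icc_smul_sub_le hab hw hf) hFb
    _ = w a * M := by ring

end Abel

theorem norm_sum_Icc_pow_div_le {𝕜 : Type*} [RCLike 𝕜] {z : 𝕜} (hz : ‖z‖ ≤ 1) (hz1 : z ≠ 1)
    {a : ℕ} (ha : 1 ≤ a) (b : ℕ) : ‖∑ k ∈ Icc a b, z ^ k / k‖ ≤ 2 / ‖z - 1‖ / a := by
  rcases lt_or_ge b a with hba | hab
  · simp only [Icc_eq_empty_of_lt hba, sum_empty, norm_zero]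
    positivity
  have hw : AntitoneOn (fun k : ℕ => (k : ℝ)⁻¹) (Set.Icc a b) := fun i hi j _ hij => by
    have : (0 : ℝ) < i := by exact_mod_cast (ha.trans hi.1)
    exact inv_anti₀ this (by exact_mod_cast hij)
  have hsmul : ∀ k : ℕ, z ^ k / k = (k : ℝ)⁻¹ • z ^ k := fun k => by
    rw [RCLike.real_smul_eq_coe_mul]
    push_cast
    ring
  simp only [hsmul]
  calc _ ≤ (a : ℝ)⁻¹ * (2 / ‖z - 1‖) :=
        norm_sum_Icc_smul_le hab hw (by positivity) fun j _ => norm_sum_Icc_pow_le hz hz1 a j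
    _ = 2 / ‖z - 1‖ / a := by ring

theorem cauchySeq_sum_Icc_of_eventually_norm_le {E : Type*} [SeminormedAddCommGroup E]
    {f : ℕ → E} {ε : ℕ → ℝ} (hε : Tendsto ε atTop (𝓝 0))
    (hf : ∀ᶠ a in atTop, ∀ b, ‖∑ k ∈ Icc a b, f k‖ ≤ ε a) (n : ℕ) :
    CauchySeq fun N => ∑ k ∈ Icc n N, f k := by
  rw [Metric.cauchySeq_iff']
  intro δ hδ
  obtain ⟨A, hA⟩ := ((hε.eventually (gt_mem_nhds hδ)).and hf).exists_forall_of_atTop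
  refine ⟨max A n, fun m hm => ?_⟩
  have hsplit : ∑ k ∈ Icc n m, f k
      = ∑ k ∈ Icc n (max A n), f k + ∑ k ∈ Icc (max A n + 1) m, f k := by
    simp only [← Ico_add_one_right_eq_Icc]
    exact (sum_Ico_consecutive f (by omega) (by omega)).symm
  rw [dist_eq_norm, hsplit, add_sub_cancel_left]
  obtain ⟨hεδ, hbound⟩ := hA (max A n + 1) (by omega)
  exact (hbound m).trans_lt hεδ

/-- For every real `ξ ∉ 2πℤ` and every `n ≥ 1`, the tail series `∑_{k=n}^∞ e^{ikξ}/k`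
converges and its sum is bounded in modulus by `1/(n |sin(ξ/2)|)`. -/
theorem tail_exp_series_bound (ξ : ℝ) (hξ : ∀ m : ℤ, ξ ≠ 2 * Real.pi * m)
    (n : ℕ) (hn : 1 ≤ n) :
    ∃ S : ℂ,
      Tendsto (fun N : ℕ => ∑ k ∈ Finset.Icc n N, Complex.exp (Complex.I * k * ξ) / k)
        atTop (𝓝 S) ∧
      ‖S‖ ≤ 1 / (n * |Real.sin (ξ / 2)|) := by
  set z := Complex.exp (Complex.I * ξ)
  have hz : ‖z‖ = 1 := Complex.norm_exp_I_mul_ofReal ξ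
  have hsin : Real.sin (ξ / 2) ≠ 0 := fun h => by
    obtain ⟨m, hm⟩ := Real.sin_eq_zero_iff.1 h
    exact hξ m (by linarith)
  have hz1 : ‖z - 1‖ = 2 * |Real.sin (ξ / 2)| := by
    rw [Complex.norm_exp_I_mul_ofReal_sub_one, norm_mul, Real.norm_eq_abs]
    norm_num
  have hzne : z ≠ 1 := fun h => by simp [h, hsin] at hz1
  have hpow : ∀ k : ℕ, Complex.exp (Complex.I * k * ξ) = z ^ k := fun k => by
    rw [← Complex.exp_nat_mul]
    ring_nf
  simp only [hpow]
  have htail : ∀ᶠ a : ℕ in atTop, ∀ b, ‖∑ k ∈ Icc a b, z ^ k / k‖ ≤ 2 / ‖z - 1‖ / a :=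
    (eventually_ge_atTop 1).mono fun a ha => norm_sum_Icc_pow_div_le hz.le hzne ha
  obtain ⟨S, hS⟩ := cauchySeq_tendsto_of_complete
    (cauchySeq_sum_Icc_of_eventually_norm_le (tendsto_const_div_atTop_nhds_zero_nat _) htail n)
  refine ⟨S, hS, le_of_tendsto' hS.norm fun N => ?_⟩
  calc _ ≤ 2 / ‖z - 1‖ / n := norm_sum_Icc_pow_div_le hz.le hzne hn N
    _ = 1 / (n * |Real.sin (ξ / 2)|) := by
        rw [hz1]
        field_simp
end

section
/- Let (B_n) be a sequence of invertible 2×2 complex matrices of the form B_n = I + (β/n)·G_n + R_n, where β > 0, G_n = [[cos(εn), sin(εn)], [sin(εn), −cos(εn)]] for a fixed ε ∈ (−2π, 2π) \ {0}, and ∑ ‖R_n‖ < ∞. Then for every f ∈ ℂ², the sequence x_n defined by x_1 = f, x_{n+1} = B_n x_n converges as n → ∞. -/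
/-!
Write `B n = 1 + a n + R n` with `a n = (β / n) G n`. Since `G n = ζⁿ A + ζ̄ⁿ Ā` with
`ζ = exp (i ε) ≠ 1`, summation by parts gives `S n = β (ζⁿ A / (n (1 - ζ)) + ζ̄ⁿ Ā / (n (1 - ζ̄)))`,
which is `O(1/n)` and satisfies `S n - S (n + 1) = a n` up to a summable error. Consequently
`(1 + S (n + 1)) B n = 1 + S n + E n` with `∑ ‖E n‖ < ∞`, so `y n = (1 + S n) x n` satisfies
`y (n + 1) = y n + E n x n`. A discrete Grönwall bound makes `y`, hence `x`, bounded; then the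
increments of `y` are summable, so `y` converges, and `x n - y n = - S n x n → 0`.
-/

open Filter Topology Matrix Asymptotics Complex
open scoped Matrix.Norms.L2Operator

lemma exists_forall_ge_le_of_le_one_add_mul {u c : ℕ → ℝ} {N : ℕ} (hc : ∀ n, 0 ≤ c n)
    (hc_sum : Summable c) (h : ∀ n ≥ N, u (n + 1) ≤ (1 + c n) * u n) :
    ∃ K, ∀ n ≥ N, u n ≤ K := by
  have hprod : ∀ n ≥ N, u n ≤ |u N| * ∏ k ∈ Finset.Ico N n, (1 + c k) := by
    intro n hn
    induction n, hn using Nat.le_induction with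
    | base => simpa using le_abs_self (u N)
    | succ n hn ih =>
      rw [Finset.prod_Ico_succ_top hn, ← mul_assoc, mul_comm _ (1 + c n)]
      exact (h n hn).trans (mul_le_mul_of_nonneg_left ih (by linarith [hc n]))
  refine ⟨|u N| * Real.exp (∑' k, c k), fun n hn => (hprod n hn).trans ?_⟩
  gcongr
  calc ∏ k ∈ Finset.Ico N n, (1 + c k) ≤ Real.exp (∑ k ∈ Finset.Ico N n, c k) :=
        Real.prod_one_add_le_exp_sum _ hc
    _ ≤ Real.exp (∑' k, c k) := Real.exp_le_exp.2 (hc_sum.sum_le_tsum _ fun k _ => hc k)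

namespace ContinuousLinearMap

variable {𝕜 V : Type*} [NontriviallyNormedField 𝕜] [NormedAddCommGroup V] [NormedSpace 𝕜 V]
  {B S E : ℕ → V →L[𝕜] V} {x : ℕ → V} {N : ℕ}

lemma add_apply_succ_eq_of_conj_eq_add (hx : ∀ n ≥ N, x (n + 1) = B n (x n))
    (hconj : ∀ n ≥ N, (1 + S (n + 1)) * B n = 1 + S n + E n) (n : ℕ) (hn : n ≥ N) :
    x (n + 1) + S (n + 1) (x (n + 1)) = x n + S n (x n) + E n (x n) := by
  simpa [hx n hn, add_assoc] using congrArg (· (x n)) (hconj n hn)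

lemma exists_forall_ge_norm_le_of_conj_eq_add (hx : ∀ n ≥ N, x (n + 1) = B n (x n))
    (hconj : ∀ n ≥ N, (1 + S (n + 1)) * B n = 1 + S n + E n)
    (hS : Tendsto S atTop (𝓝 0)) (hE : Summable fun n => ‖E n‖) :
    ∃ K, ∀ᶠ n in atTop, ‖x n‖ ≤ K := by
  obtain ⟨M, hMN, hSM⟩ : ∃ M ≥ N, ∀ n ≥ M, ‖S n‖ ≤ 1 / 2 := by
    obtain ⟨M, hM⟩ := eventually_atTop.1
      ((tendsto_norm_zero.comp hS).eventually (ge_mem_nhds (by norm_num : (0 : ℝ) < 1 / 2)))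
    exact ⟨max M N, le_max_right _ _, fun n hn => hM n (le_of_max_le_left hn)⟩
  have hxy : ∀ n ≥ M, ‖x n‖ ≤ 2 * ‖x n + S n (x n)‖ := by
    intro n hn
    have h1 : ‖S n (x n)‖ ≤ 1 / 2 * ‖x n‖ :=
      ((S n).le_opNorm _).trans (mul_le_mul_of_nonneg_right (hSM n hn) (norm_nonneg _))
    have h2 := norm_sub_le (x n + S n (x n)) (S n (x n))
    rw [add_sub_cancel_right] at h2
    linarith
  obtain ⟨K, hK⟩ := exists_forall_ge_le_of_le_one_add_mul (u := fun n => ‖x n + S n (x n)‖)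
    (fun n => by positivity) (hE.mul_left 2) fun n hn => by
      rw [add_apply_succ_eq_of_conj_eq_add hx hconj n (hMN.trans hn)]
      calc ‖x n + S n (x n) + E n (x n)‖ ≤ ‖x n + S n (x n)‖ + ‖E n‖ * ‖x n‖ :=
            (norm_add_le _ _).trans (by gcongr; exact (E n).le_opNorm _)
        _ ≤ ‖x n + S n (x n)‖ + ‖E n‖ * (2 * ‖x n + S n (x n)‖) := by
            gcongr; exact hxy n hn
        _ = (1 + 2 * ‖E n‖) * ‖x n + S n (x n)‖ := by ring
  exact ⟨2 * K, eventually_atTop.2 ⟨M, fun n hn => (hxy n hn).trans (by linarith [hK n hn])⟩⟩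

theorem exists_tendsto_of_conj_eq_add [CompleteSpace V] (hx : ∀ n ≥ N, x (n + 1) = B n (x n))
    (hconj : ∀ n ≥ N, (1 + S (n + 1)) * B n = 1 + S n + E n)
    (hS : Tendsto S atTop (𝓝 0)) (hE : Summable fun n => ‖E n‖) :
    ∃ L, Tendsto x atTop (𝓝 L) := by
  obtain ⟨K, hK⟩ := exists_forall_ge_norm_le_of_conj_eq_add hx hconj hS hE
  set y : ℕ → V := fun n => x n + S n (x n)
  have hdist : Summable fun n => dist (y n) (y (n + 1)) := by
    refine .of_norm_bounded_eventually_nat (hE.mul_right K) ?_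
    filter_upwards [hK, eventually_ge_atTop N] with n hKn hn
    rw [Real.norm_eq_abs, abs_dist, dist_comm, dist_eq_norm]
    simp only [y]
    rw [add_apply_succ_eq_of_conj_eq_add hx hconj n hn, add_sub_cancel_left]
    exact ((E n).le_opNorm _).trans (by gcongr)
  obtain ⟨L, hL⟩ := cauchySeq_tendsto_of_complete (cauchySeq_of_summable_dist hdist)
  have hSx : Tendsto (fun n => S n (x n)) atTop (𝓝 0) := by
    refine squeeze_zero_norm' ?_ (by simpa using (tendsto_norm_zero.comp hS).mul_const K)
    filter_upwards [hK] with n hKn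
    exact ((S n).le_opNorm _).trans (by gcongr)
  exact ⟨L, by simpa [y] using hL.sub hSx⟩

end ContinuousLinearMap

lemma isBigO_natCast_succ_inv :
    (fun n : ℕ => ((n + 1 : ℕ) : ℝ)⁻¹) =O[atTop] fun n => (n : ℝ)⁻¹ := by
  refine IsBigO.of_bound' ?_
  filter_upwards [eventually_ge_atTop 1] with n hn
  simp only [Real.norm_eq_abs]
  rw [abs_of_pos (by positivity), abs_of_pos (by positivity)]
  gcongr
  simp

structure IsTelescopingPrimitive {E : Type*} [NormedAddCommGroup E] (S a : ℕ → E) :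
    Prop where
  isBigO_primitive : S =O[atTop] fun n => (n : ℝ)⁻¹
  isBigO : a =O[atTop] fun n => (n : ℝ)⁻¹
  summable_norm_sub : Summable fun n => ‖S n - S (n + 1) - a n‖

namespace IsTelescopingPrimitive

section NormedSpace

variable {𝕜 E : Type*} [NormedField 𝕜] [NormedAddCommGroup E] [NormedSpace 𝕜 E]
  {S a S' a' : ℕ → E}

lemma add (h : IsTelescopingPrimitive S a) (h' : IsTelescopingPrimitive S' a') :
    IsTelescopingPrimitive (S + S') (a + a') where
  isBigO_primitive := h.isBigO_primitive.add h'.isBigO_primitive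
  isBigO := h.isBigO.add h'.isBigO
  summable_norm_sub := by
    refine .of_nonneg_of_le (fun _ => norm_nonneg _) (fun n => (norm_add_le _ _).trans_eq' ?_)
      (h.summable_norm_sub.add h'.summable_norm_sub)
    simp only [Pi.add_apply]
    congr 1
    abel

lemma const_smul (h : IsTelescopingPrimitive S a) (c : 𝕜) :
    IsTelescopingPrimitive (c • S) (c • a) where
  isBigO_primitive := h.isBigO_primitive.const_smul_left c
  isBigO := h.isBigO.const_smul_left c
  summable_norm_sub := by
    simpa only [Pi.smul_apply, ← smul_sub, norm_smul] using h.summable_norm_sub.mul_left ‖c‖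

lemma smul_const {S a : ℕ → 𝕜} (h : IsTelescopingPrimitive S a) (A : E) :
    IsTelescopingPrimitive (fun n => S n • A) (fun n => a n • A) where
  isBigO_primitive := by
    simpa using h.isBigO_primitive.smul (isBigO_const_const A (one_ne_zero (α := ℝ)) atTop)
  isBigO := by simpa using h.isBigO.smul (isBigO_const_const A (one_ne_zero (α := ℝ)) atTop)
  summable_norm_sub := by
    simpa only [← sub_smul, norm_smul] using h.summable_norm_sub.mul_right ‖A‖

lemma tendsto_zero (h : IsTelescopingPrimitive S a) : Tendsto S atTop (𝓝 0) :=
  h.isBigO_primitive.trans_tendsto (tendsto_inv_atTop_zero.comp tendsto_natCast_atTop_atTop)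

end NormedSpace

variable {A : Type*} [NormedRing A] {S a R : ℕ → A}

lemma summable_norm_conj_sub (h : IsTelescopingPrimitive S a) (hR : Summable fun n => ‖R n‖) :
    Summable fun n => ‖(1 + S (n + 1)) * (1 + a n + R n) - (1 + S n)‖ := by
  have hS₁ : (fun n => S (n + 1)) =O[atTop] fun n => (n : ℝ)⁻¹ :=
    (h.isBigO_primitive.comp_tendsto (tendsto_add_atTop_nat 1)).trans isBigO_natCast_succ_inv
  have hSa : Summable fun n => ‖S (n + 1) * a n‖ := by
    refine summable_of_isBigO_nat (Real.summable_nat_pow_inv.2 one_lt_two) ?_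
    simpa only [sq, mul_inv] using (hS₁.mul h.isBigO).norm_left
  have hSR : Summable fun n => ‖S (n + 1) * R n‖ := by
    refine summable_of_isBigO_nat hR ?_
    simpa using (((h.tendsto_zero.comp (tendsto_add_atTop_nat 1)).isBigO_one ℝ).mul
      (isBigO_norm_right.2 (isBigO_refl R atTop))).norm_left
  refine .of_nonneg_of_le (fun _ => norm_nonneg _) (fun n => ?_)
    (((h.summable_norm_sub.add hR).add hSa).add hSR)
  calc ‖(1 + S (n + 1)) * (1 + a n + R n) - (1 + S n)‖
      = ‖-(S n - S (n + 1) - a n) + R n + S (n + 1) * a n + S (n + 1) * R n‖ := by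
        congr 1; noncomm_ring
    _ ≤ _ := by
        refine norm_add₄_le.trans ?_
        rw [norm_neg]

end IsTelescopingPrimitive

theorem Matrix.exists_tendsto_of_isTelescopingPrimitive {ι 𝕜 : Type*} [RCLike 𝕜] [Fintype ι]
    [DecidableEq ι] {S a R B : ℕ → Matrix ι ι 𝕜} {x : ℕ → ι → 𝕜} {N : ℕ}
    (hSa : IsTelescopingPrimitive S a) (hR : Summable fun n => ‖R n‖)
    (hB : ∀ n ≥ N, B n = 1 + a n + R n) (hx : ∀ n ≥ N, x (n + 1) = B n *ᵥ x n) :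
    ∃ L, Tendsto x atTop (𝓝 L) := by
  let T := toEuclideanCLM (n := ι) (𝕜 := 𝕜)
  obtain ⟨L, hL⟩ := ContinuousLinearMap.exists_tendsto_of_conj_eq_add (N := N)
    (x := fun n => WithLp.toLp 2 (x n)) (B := fun n => T (B n)) (S := fun n => T (S n))
    (E := fun n => T ((1 + S (n + 1)) * (1 + a n + R n) - (1 + S n)))
    (fun n hn => by simp [T, hx n hn])
    (fun n hn => by simp only [← map_one T, ← map_add, ← map_mul, hB n hn]; congr 1; abel)
    (tendsto_zero_iff_norm_tendsto_zero.2 (tendsto_zero_iff_norm_tendsto_zero.1 hSa.tendsto_zero :))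
    (hSa.summable_norm_conj_sub hR)
  exact ⟨WithLp.ofLp L, ((PiLp.continuous_ofLp 2 _).tendsto L).comp hL⟩

section GeomPrimitive

variable {𝕜 : Type*} [RCLike 𝕜]

def geomPrimitive (ζ : 𝕜) (n : ℕ) : 𝕜 := ζ ^ n / (n * (1 - ζ))

lemma geomPrimitive_sub_succ_sub {ζ : 𝕜} (hζ : ζ ≠ 1) {n : ℕ} (hn : n ≠ 0) :
    geomPrimitive ζ n - geomPrimitive ζ (n + 1) - ζ ^ n / n =
      ζ ^ (n + 1) / ((n * (n + 1) : ℕ) * (1 - ζ)) := by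
  have : (1 - ζ) ≠ 0 := sub_ne_zero.2 hζ.symm
  have : (n : 𝕜) ≠ 0 := Nat.cast_ne_zero.2 hn
  have : (n : 𝕜) + 1 ≠ 0 := by exact_mod_cast n.succ_ne_zero
  simp only [geomPrimitive, Nat.cast_mul, Nat.cast_succ]
  field_simp
  ring

lemma isTelescopingPrimitive_geomPrimitive {ζ : 𝕜} (hζ : ‖ζ‖ ≤ 1) (hζ1 : ζ ≠ 1) :
    IsTelescopingPrimitive (geomPrimitive ζ) fun n => ζ ^ n / n where
  isBigO_primitive := by
    refine IsBigO.of_bound ‖1 - ζ‖⁻¹ (Eventually.of_forall fun n => ?_)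
    simp only [geomPrimitive, norm_div, norm_mul, norm_pow, RCLike.norm_natCast, norm_inv]
    calc ‖ζ‖ ^ n / (n * ‖1 - ζ‖) ≤ 1 / (n * ‖1 - ζ‖) := by
          gcongr; exact pow_le_one₀ (norm_nonneg _) hζ
      _ = ‖1 - ζ‖⁻¹ * (n : ℝ)⁻¹ := by rw [one_div, mul_inv, mul_comm]
  isBigO := by
    refine IsBigO.of_bound 1 (Eventually.of_forall fun n => ?_)
    simp only [norm_div, norm_pow, RCLike.norm_natCast, norm_inv, one_mul]
    rw [div_eq_mul_inv]
    exact mul_le_of_le_one_left (by positivity) (pow_le_one₀ (norm_nonneg _) hζ)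
  summable_norm_sub := by
    have hζ1' : 0 < ‖1 - ζ‖ := norm_pos_iff.2 (sub_ne_zero.2 hζ1.symm)
    refine summable_of_isBigO_nat ((Real.summable_nat_pow_inv.2 one_lt_two).mul_left ‖1 - ζ‖⁻¹) ?_
    refine IsBigO.of_bound 1 ?_
    filter_upwards [eventually_ne_atTop 0] with n hn
    rw [geomPrimitive_sub_succ_sub hζ1 hn, norm_norm, one_mul, Real.norm_of_nonneg (by positivity),
      norm_div, norm_mul, norm_pow, RCLike.norm_natCast]
    have hn' : (0 : ℝ) < n := by positivity
    calc ‖ζ‖ ^ (n + 1) / ((n * (n + 1) : ℕ) * ‖1 - ζ‖) ≤ 1 / ((n : ℝ) ^ 2 * ‖1 - ζ‖) := by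
          gcongr
          · exact pow_le_one₀ (norm_nonneg _) hζ
          · push_cast; nlinarith
      _ = ‖1 - ζ‖⁻¹ * ((n : ℝ) ^ 2)⁻¹ := by rw [one_div, mul_inv, mul_comm]

end GeomPrimitive

lemma Complex.exp_ofReal_mul_I_ne_one {θ : ℝ} (h₁ : -(2 * Real.pi) < θ) (h₂ : θ < 2 * Real.pi)
    (h₀ : θ ≠ 0) : cexp (θ * I) ≠ 1 := fun h => h₀ <| by
  rw [← Real.cos_eq_one_iff_of_lt_of_lt h₁ h₂, ← exp_ofReal_mul_I_re, h, one_re]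

lemma reflection_eq_exp_pow_smul_add (ε : ℝ) (n : ℕ) :
    !![(Real.cos (ε * n) : ℂ), (Real.sin (ε * n) : ℂ);
       (Real.sin (ε * n) : ℂ), -(Real.cos (ε * n) : ℂ)] =
      cexp (ε * I) ^ n • !![1 / 2, -I / 2; -I / 2, -1 / 2] +
        cexp (↑(-ε) * I) ^ n • !![1 / 2, I / 2; I / 2, -1 / 2] := by
  have hpow : ∀ θ : ℝ, cexp (θ * I) ^ n = cos ↑(θ * n) + sin ↑(θ * n) * I := fun θ => by
    rw [← exp_nat_mul, ← exp_mul_I]; push_cast; ring_nf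
  rw [hpow, hpow]
  ext i j
  fin_cases i <;> fin_cases j <;> simp <;> ring_nf <;> simp [I_sq]

theorem model_system_converges_eps_ne_zero_general (β ε : ℝ)
    (hε : ε ∈ Set.Ioo (-(2 * Real.pi)) (2 * Real.pi)) (hε0 : ε ≠ 0)
    (R B : ℕ → Matrix (Fin 2) (Fin 2) ℂ) (hR : Summable fun n => ‖R n‖)
    (hB : ∀ n : ℕ, 1 ≤ n → B n = 1 +
      (((β / n : ℝ)) : ℂ) •
        !![(Real.cos (ε * n) : ℂ), (Real.sin (ε * n) : ℂ);
           (Real.sin (ε * n) : ℂ), -(Real.cos (ε * n) : ℂ)] + R n)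
    (x : ℕ → Fin 2 → ℂ) (hx : ∀ n : ℕ, 1 ≤ n → x (n + 1) = B n *ᵥ x n) :
    ∃ L : Fin 2 → ℂ, Tendsto x atTop (𝓝 L) := by
  have hζ : cexp (ε * I) ≠ 1 := exp_ofReal_mul_I_ne_one hε.1 hε.2 hε0
  have hζ' : cexp (↑(-ε) * I) ≠ 1 :=
    exp_ofReal_mul_I_ne_one (by linarith [hε.2]) (by linarith [hε.1]) (neg_ne_zero.2 hε0)
  have hprim := (((isTelescopingPrimitive_geomPrimitive (norm_exp_ofReal_mul_I ε).le hζ).smul_const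
    !![1 / 2, -I / 2; -I / 2, -1 / 2]).add
      ((isTelescopingPrimitive_geomPrimitive (norm_exp_ofReal_mul_I (-ε)).le hζ').smul_const
        !![1 / 2, I / 2; I / 2, -1 / 2])).const_smul (β : ℂ)
  refine Matrix.exists_tendsto_of_isTelescopingPrimitive hprim hR (fun n hn => ?_) hx
  rw [hB n hn, reflection_eq_exp_pow_smul_add]
  simp only [Pi.smul_apply, Pi.add_apply]
  push_cast
  module

/-- Model system, `ε ≠ 0`: if `B_n = I + (β/n) G_n + R_n` with `β > 0`,
`G_n = [[cos(εn), sin(εn)],[sin(εn), -cos(εn)]]`, `ε ∈ (-2π, 2π) \ {0}`, `∑ ‖R_n‖ < ∞`,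
and all `B_n` are invertible, then every solution of `x_{n+1} = B_n x_n` converges. -/
theorem model_system_converges_eps_ne_zero (β ε : ℝ) (hβ : 0 < β)
    (hε : ε ∈ Set.Ioo (-(2 * Real.pi)) (2 * Real.pi)) (hε0 : ε ≠ 0)
    (R B : ℕ → Matrix (Fin 2) (Fin 2) ℂ) (hR : Summable fun n => ‖R n‖)
    (hB : ∀ n : ℕ, 1 ≤ n → B n = 1 +
      (((β / n : ℝ)) : ℂ) •
        !![(Real.cos (ε * n) : ℂ), (Real.sin (ε * n) : ℂ);
           (Real.sin (ε * n) : ℂ), -(Real.cos (ε * n) : ℂ)] + R n)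
    (hinv : ∀ n : ℕ, IsUnit (B n))
    (f : Fin 2 → ℂ) (x : ℕ → Fin 2 → ℂ)
    (hx1 : x 1 = f) (hx : ∀ n : ℕ, 1 ≤ n → x (n + 1) = B n *ᵥ x n) :
    ∃ L : Fin 2 → ℂ, Tendsto x atTop (𝓝 L) :=
  model_system_converges_eps_ne_zero_general β ε hε hε0 R B hR hB x hx
end

section
/- Let B_n = I + (β/n)·[[1, 0], [0, −1]] + R_n with β > 0 and ∑ ‖R_n‖ < ∞, and assume each B_n is invertible. Let x_1 = f and x_{n+1} = B_n x_n. Then the limit L(f) := lim_{n→∞} x_n / n^β exists for every f ∈ ℂ², and the linear map f ↦ L(f) has rank at most one. -/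
open Filter Topology Matrix
open scoped Matrix.Norms.L2Operator

/-! Dividing `x_n` by `a_n = ∏_{k<n} (1 + β/(k+1))` turns the recursion into
`y_{n+1} = diag(1, μ_n) y_n + e_n` with `μ_n = (1 - β/n)/(1 + β/n)` and `‖e_n‖ ≤ C ‖R_n‖ ‖y_n‖`.
A discrete Grönwall bound keeps `y_n` bounded, so the first coordinate has summable increments and
converges, while the second tends to `0` because `∑ (1 - |μ_n|)` diverges like the harmonic
series. Euler's limit formula for `Γ` gives `a_n ~ n^β / (β Γ(β))`, so every limit lies on the
first coordinate axis. -/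

lemma le_mul_exp_tsum_of_le_one_add_mul {u t : ℕ → ℝ} (hu : ∀ n, 0 ≤ u n) (ht : ∀ n, 0 ≤ t n)
    (hts : Summable t) (hrec : ∀ n, u (n + 1) ≤ (1 + t n) * u n) (n : ℕ) :
    u n ≤ u 0 * Real.exp (∑' k, t k) := by
  have hpartial : u n ≤ u 0 * Real.exp (∑ k ∈ Finset.range n, t k) := by
    induction n with
    | zero => simp
    | succ n ih =>
      calc u (n + 1) ≤ (1 + t n) * u n := hrec n
        _ ≤ Real.exp (t n) * (u 0 * Real.exp (∑ k ∈ Finset.range n, t k)) := by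
          refine mul_le_mul ?_ ih (hu n) (Real.exp_pos _).le
          linarith [Real.add_one_le_exp (t n)]
        _ = u 0 * Real.exp (∑ k ∈ Finset.range (n + 1), t k) := by
          rw [Finset.sum_range_succ, Real.exp_add]; ring
  refine hpartial.trans ?_
  gcongr
  · exact hu 0
  · exact hts.sum_le_tsum _ fun k _ => ht k

lemma tendsto_prod_Ico_of_not_summable_one_sub {u : ℕ → ℝ} (h0 : ∀ n, 0 ≤ u n)
    (h1 : ∀ n, u n ≤ 1) (hdiv : ¬Summable fun n => 1 - u n) (m : ℕ) :
    Tendsto (fun n => ∏ k ∈ Finset.Ico m n, u k) atTop (𝓝 0) := by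
  have hpartial := (not_summable_iff_tendsto_nat_atTop_of_nonneg
    fun n => sub_nonneg.2 (h1 n)).1 hdiv
  have htail : Tendsto (fun n => ∑ k ∈ Finset.Ico m n, (1 - u k)) atTop atTop := by
    refine (tendsto_atTop_add_const_right _ (-∑ k ∈ Finset.range m, (1 - u k)) hpartial).congr' ?_
    filter_upwards [eventually_ge_atTop m] with n hn
    rw [Finset.sum_Ico_eq_sub _ hn, sub_eq_add_neg]
  have hexp : Tendsto (fun n => Real.exp (-∑ k ∈ Finset.Ico m n, (1 - u k))) atTop (𝓝 0) :=
    Real.tendsto_exp_neg_atTop_nhds_zero.comp htail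
  refine tendsto_of_tendsto_of_tendsto_of_le_of_le tendsto_const_nhds hexp
    (fun n => Finset.prod_nonneg fun k _ => h0 k) fun n => ?_
  calc ∏ k ∈ Finset.Ico m n, u k ≤ ∏ k ∈ Finset.Ico m n, Real.exp (-(1 - u k)) :=
        Finset.prod_le_prod (fun k _ => h0 k) fun k _ => by
          linarith [Real.add_one_le_exp (-(1 - u k))]
    _ = Real.exp (-∑ k ∈ Finset.Ico m n, (1 - u k)) := by
        rw [← Real.exp_sum, Finset.sum_neg_distrib]

lemma tendsto_zero_of_eq_mul_add {𝕜 : Type*} [NormedField 𝕜] {z μ ε : ℕ → 𝕜}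
    (hz : ∀ n, z (n + 1) = μ n * z n + ε n) (hμ : ∀ n, ‖μ n‖ ≤ 1)
    (hdiv : ¬Summable fun n => 1 - ‖μ n‖) (hε : Summable fun n => ‖ε n‖) :
    Tendsto z atTop (𝓝 0) := by
  have hbound : ∀ m n, m ≤ n →
      ‖z n‖ ≤ (∏ k ∈ Finset.Ico m n, ‖μ k‖) * ‖z m‖ + ∑ k ∈ Finset.Ico m n, ‖ε k‖ := by
    intro m n hmn
    induction n, hmn using Nat.le_induction with
    | base => simp
    | succ n hmn ih =>
      rw [Finset.prod_Ico_succ_top hmn, Finset.sum_Ico_succ_top hmn, hz]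
      calc ‖μ n * z n + ε n‖ ≤ ‖μ n‖ * ‖z n‖ + ‖ε n‖ :=
            (norm_add_le _ _).trans_eq (by rw [norm_mul])
        _ ≤ ‖μ n‖ * ((∏ k ∈ Finset.Ico m n, ‖μ k‖) * ‖z m‖ + ∑ k ∈ Finset.Ico m n, ‖ε k‖)
            + ‖ε n‖ := by gcongr
        _ ≤ _ := by
          have hsum : 0 ≤ ∑ k ∈ Finset.Ico m n, ‖ε k‖ :=
            Finset.sum_nonneg fun _ _ => norm_nonneg _
          nlinarith [hμ n]
  rw [NormedAddGroup.tendsto_nhds_zero]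
  intro δ hδ
  obtain ⟨m, hm⟩ := ((tendsto_sum_nat_add fun k => ‖ε k‖).eventually
    (gt_mem_nhds (half_pos hδ))).exists
  have hprod : Tendsto (fun n => (∏ k ∈ Finset.Ico m n, ‖μ k‖) * ‖z m‖) atTop (𝓝 0) := by
    simpa using (tendsto_prod_Ico_of_not_summable_one_sub (fun n => norm_nonneg _) hμ hdiv
      m).mul_const ‖z m‖
  filter_upwards [hprod.eventually (gt_mem_nhds (half_pos hδ)), eventually_ge_atTop m]
    with n hn hmn
  have htail : ∑ k ∈ Finset.Ico m n, ‖ε k‖ ≤ ∑' k, ‖ε (k + m)‖ := by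
    rw [Finset.sum_Ico_eq_sum_range]
    simp_rw [add_comm m]
    exact ((summable_nat_add_iff m).2 hε).sum_le_tsum _ fun _ _ => norm_nonneg _
  linarith [hbound m n hmn]

lemma exists_tendsto_of_eq_diagonal_mulVec_add {𝕜 : Type*} [NormedField 𝕜] [CompleteSpace 𝕜]
    {y e : ℕ → Fin 2 → 𝕜} {μ : ℕ → 𝕜} {t : ℕ → ℝ}
    (hy : ∀ n, y (n + 1) = diagonal ![1, μ n] *ᵥ y n + e n) (hμ : ∀ n, ‖μ n‖ ≤ 1)
    (hdiv : ¬Summable fun n => 1 - ‖μ n‖) (ht0 : ∀ n, 0 ≤ t n) (ht : Summable t)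
    (he : ∀ n, ‖e n‖ ≤ t n * ‖y n‖) :
    ∃ z : Fin 2 → 𝕜, z 1 = 0 ∧ Tendsto y atTop (𝓝 z) := by
  have hy0 : ∀ n, y (n + 1) 0 = y n 0 + e n 0 := fun n => by simp [hy]
  have hy1 : ∀ n, y (n + 1) 1 = μ n * y n 1 + e n 1 := fun n => by simp [hy]
  have hstep : ∀ n, ‖y (n + 1)‖ ≤ (1 + t n) * ‖y n‖ := by
    intro n
    refine (pi_norm_le_iff_of_nonneg (by positivity [ht0 n])).2 fun i => ?_
    have hdiag : ‖(diagonal ![1, μ n] *ᵥ y n) i‖ ≤ ‖y n‖ := by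
      rw [mulVec_diagonal, norm_mul]
      refine (mul_le_of_le_one_left (norm_nonneg _) ?_).trans (norm_le_pi_norm _ i)
      fin_cases i <;> simp [hμ n]
    calc ‖y (n + 1) i‖ ≤ ‖y n‖ + t n * ‖y n‖ := by
          rw [hy, Pi.add_apply]
          exact (norm_add_le _ _).trans (add_le_add hdiag ((norm_le_pi_norm _ i).trans (he n)))
      _ = (1 + t n) * ‖y n‖ := by ring
  set M := ‖y 0‖ * Real.exp (∑' k, t k)
  have hbound : ∀ n, ‖y n‖ ≤ M :=
    le_mul_exp_tsum_of_le_one_add_mul (fun n => norm_nonneg _) ht0 ht hstep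
  have he_sum : ∀ i, Summable fun n => ‖e n i‖ :=
    fun i => (ht.mul_right M).of_nonneg_of_le (fun n => norm_nonneg _) fun n =>
      (norm_le_pi_norm _ i).trans <| (he n).trans <| mul_le_mul_of_nonneg_left (hbound n) (ht0 n)
  obtain ⟨c, hc⟩ : ∃ c, Tendsto (fun n => y n 0) atTop (𝓝 c) :=
    cauchySeq_tendsto_of_complete <| cauchySeq_of_summable_dist <| by
      simpa [dist_eq_norm, hy0] using he_sum 0
  refine ⟨![c, 0], rfl, tendsto_pi_nhds.2 fun i => ?_⟩
  fin_cases i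
  · exact hc
  · exact tendsto_zero_of_eq_mul_add hy1 hμ hdiv (he_sum 1)

lemma exists_norm_mulVec_le {ι 𝕜 : Type*} [Fintype ι] [DecidableEq ι] [RCLike 𝕜] :
    ∃ K : ℝ, 0 ≤ K ∧ ∀ (A : Matrix ι ι 𝕜) (v : ι → 𝕜), ‖A *ᵥ v‖ ≤ K * ‖A‖ * ‖v‖ := by
  let Φ := LinearMap.toContinuousLinearMap <|
    LinearMap.toContinuousLinearMap.toLinearMap ∘ₗ (toLin' : Matrix ι ι 𝕜 ≃ₗ[𝕜] _).toLinearMap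
  exact ⟨‖Φ‖, norm_nonneg Φ, fun A v =>
    ((Φ A).le_opNorm v).trans (by gcongr; exact Φ.le_opNorm A)⟩

lemma exists_linearMap_eq_of_eq_mulVec {ι 𝕜 : Type*} [Fintype ι] [CommSemiring 𝕜]
    {x : (ι → 𝕜) → ℕ → ι → 𝕜} (A : ℕ → Matrix ι ι 𝕜) (h0 : ∀ f, x f 0 = f)
    (hx : ∀ f n, x f (n + 1) = A n *ᵥ x f n) (n : ℕ) :
    ∃ Φ : (ι → 𝕜) →ₗ[𝕜] ι → 𝕜, ∀ f, x f n = Φ f := by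
  induction n with
  | zero => exact ⟨LinearMap.id, h0⟩
  | succ n ih =>
    obtain ⟨Φ, hΦ⟩ := ih
    exact ⟨(A n).mulVecLin ∘ₗ Φ, fun f => by simp [hx, hΦ]⟩

lemma abs_one_sub_div_one_add_le_one {b : ℝ} (hb : 0 ≤ b) : |(1 - b) / (1 + b)| ≤ 1 := by
  have hb1 : 0 < 1 + b := by linarith
  rw [abs_div, abs_of_pos hb1, div_le_one hb1, abs_le]
  constructor <;> linarith

lemma not_summable_one_sub_abs_one_sub_div_one_add {β : ℝ} (hβ : 0 < β) :
    ¬Summable fun k : ℕ => 1 - |(1 - β / (k + 1)) / (1 + β / (k + 1))| := by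
  have hharmonic : ¬Summable fun k : ℕ => 2 * β * (1 / |k + (1 + β)| ^ (1 : ℝ)) := by
    rw [summable_mul_left_iff (by positivity), Real.summable_one_div_nat_add_rpow]
    exact lt_irrefl 1
  refine fun h => hharmonic (h.congr_atTop ?_)
  filter_upwards [eventually_ge_atTop ⌈β⌉₊] with k hk
  have hβk : β ≤ k + 1 := by linarith [(Nat.ceil_le.1 hk : β ≤ k)]
  have hk1 : (0 : ℝ) < k + 1 := by positivity
  rw [abs_of_nonneg (div_nonneg (sub_nonneg.2 ((div_le_one hk1).2 hβk)) (by positivity)),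
    Real.rpow_one, abs_of_pos (by positivity)]
  field_simp
  ring

lemma prod_range_one_add_div_mul_factorial (β : ℝ) (n : ℕ) :
    (∏ k ∈ Finset.range n, (1 + β / (k + 1))) * (β * n.factorial) =
      ∏ j ∈ Finset.range (n + 1), (β + j) := by
  induction n with
  | zero => simp
  | succ n ih =>
    rw [Finset.prod_range_succ, Finset.prod_range_succ _ (n + 1), ← ih, Nat.factorial_succ]
    push_cast
    field_simp
    ring

lemma tendsto_prod_range_one_add_div_div_rpow {β : ℝ} (hβ : 0 < β) :
    Tendsto (fun n : ℕ => (∏ k ∈ Finset.range n, (1 + β / (k + 1))) / ((n : ℝ) + 1) ^ β)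
      atTop (𝓝 (β * Real.Gamma β)⁻¹) := by
  have hratio : Tendsto (fun n : ℕ => ((n : ℝ) / (n + 1)) ^ β) atTop (𝓝 1) := by
    have := (Real.continuousAt_rpow_const 1 β (Or.inl one_ne_zero)).tendsto.comp
      (tendsto_natCast_div_add_atTop (1 : ℝ))
    rwa [Real.one_rpow] at this
  have hGamma : Tendsto (fun n => (β * Real.GammaSeq β n)⁻¹) atTop (𝓝 (β * Real.Gamma β)⁻¹) :=
    ((Real.GammaSeq_tendsto_Gamma β).const_mul β).inv₀
      (mul_pos hβ (Real.Gamma_pos_of_pos hβ)).ne'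
  have hprod := hratio.mul hGamma
  rw [one_mul] at hprod
  refine hprod.congr' ?_
  filter_upwards [eventually_ge_atTop 1] with n hn
  have hn0 : (0 : ℝ) < n := by exact_mod_cast hn
  rw [Real.GammaSeq, ← prod_range_one_add_div_mul_factorial, Real.div_rpow hn0.le (by positivity)]
  have hnβ : 0 < (n : ℝ) ^ β := Real.rpow_pos_of_pos hn0 β
  have hfact : (0 : ℝ) < n.factorial := by positivity
  field_simp

lemma inv_one_add_smul_one_add_smul_eq_diagonal {𝕜 : Type*} [Field 𝕜] {b : 𝕜} (hb : 1 + b ≠ 0) :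
    (1 + b)⁻¹ • (1 + b • !![1, 0; 0, -1] : Matrix (Fin 2) (Fin 2) 𝕜) =
      diagonal ![1, (1 - b) / (1 + b)] := by
  ext i j
  fin_cases i <;> fin_cases j <;> simp [sub_eq_add_neg] <;> field_simp

lemma inv_one_add_smul_mulVec_eq_diagonal_mulVec_add {b : ℝ} (hb : 1 + b ≠ 0)
    (R : Matrix (Fin 2) (Fin 2) ℂ) (v : Fin 2 → ℂ) :
    (1 + b)⁻¹ • ((1 + (b : ℂ) • !![1, 0; 0, -1] + R) *ᵥ v) =
      diagonal ![1, (1 - (b : ℂ)) / (1 + b)] *ᵥ v + (1 + b)⁻¹ • (R *ᵥ v) := by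
  have hbC : (1 + b : ℂ) ≠ 0 := by exact_mod_cast hb
  simp only [← Complex.coe_smul]
  push_cast
  rw [← smul_mulVec, smul_add, inv_one_add_smul_one_add_smul_eq_diagonal hbC, add_mulVec,
    smul_mulVec]

lemma exists_tendsto_rpow_inv_smul_of_eq_mulVec {β : ℝ} (hβ : 0 < β)
    {R : ℕ → Matrix (Fin 2) (Fin 2) ℂ} (hR : Summable fun n => ‖R n‖) {s : ℕ → Fin 2 → ℂ}
    (hs : ∀ n : ℕ, s (n + 1) = (1 + ((β / (n + 1) : ℝ) : ℂ) • !![1, 0; 0, -1] + R n) *ᵥ s n) :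
    ∃ z : Fin 2 → ℂ, z 1 = 0 ∧ Tendsto (fun n : ℕ => (((n : ℝ) + 1) ^ β)⁻¹ • s n) atTop (𝓝 z) := by
  set b : ℕ → ℝ := fun n => β / (n + 1)
  set a : ℕ → ℝ := fun n => ∏ k ∈ Finset.range n, (1 + b k)
  have hb : ∀ n, 0 < 1 + b n := fun n => by positivity
  have ha : ∀ n, 0 < a n := fun n => Finset.prod_pos fun k _ => hb k
  set y : ℕ → Fin 2 → ℂ := fun n => (a n)⁻¹ • s n
  set μ : ℕ → ℂ := fun n => (1 - b n) / (1 + b n)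
  set e : ℕ → Fin 2 → ℂ := fun n => (1 + b n)⁻¹ • (R n *ᵥ y n)
  have hy : ∀ n, y (n + 1) = diagonal ![1, μ n] *ᵥ y n + e n := by
    intro n
    have hsn : s n = a n • y n := by simp [y, smul_smul, (ha n).ne']
    calc y (n + 1) = (a n * (1 + b n))⁻¹ • (_ *ᵥ s n) := by
          rw [← hs n]; simp only [y, a, Finset.prod_range_succ]
      _ = (1 + b n)⁻¹ • ((1 + (b n : ℂ) • !![1, 0; 0, -1] + R n) *ᵥ y n) := by
          rw [hsn, mulVec_smul, smul_smul, _root_.mul_inv_rev, inv_mul_cancel_right₀ (ha n).ne']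
      _ = diagonal ![1, μ n] *ᵥ y n + e n :=
          inv_one_add_smul_mulVec_eq_diagonal_mulVec_add (hb n).ne' _ _
  have hμ : ∀ n, ‖μ n‖ = |(1 - b n) / (1 + b n)| := fun n => by
    simp only [μ]; norm_cast
  have hμ_le : ∀ n, ‖μ n‖ ≤ 1 := fun n =>
    (hμ n).trans_le (abs_one_sub_div_one_add_le_one (by positivity))
  obtain ⟨K, hK0, hK⟩ := exists_norm_mulVec_le (ι := Fin 2) (𝕜 := ℂ)
  have he : ∀ n, ‖e n‖ ≤ K * ‖R n‖ * ‖y n‖ := fun n => by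
    rw [norm_smul, Real.norm_of_nonneg (inv_pos.2 (hb n)).le]
    refine (mul_le_of_le_one_left (norm_nonneg _) ?_).trans (hK _ _)
    exact inv_le_one_of_one_le₀ (le_add_of_nonneg_right (by positivity))
  have hdiv : ¬Summable fun n => 1 - ‖μ n‖ := by
    simpa only [hμ] using not_summable_one_sub_abs_one_sub_div_one_add hβ
  obtain ⟨z, hz1, hz⟩ := exists_tendsto_of_eq_diagonal_mulVec_add hy hμ_le hdiv
    (fun n => by positivity) (hR.mul_left K) he
  refine ⟨(β * Real.Gamma β)⁻¹ • z, by simp [hz1], ?_⟩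
  refine ((tendsto_prod_range_one_add_div_div_rpow hβ).smul hz).congr fun n => ?_
  simp only [y, smul_smul]
  congr 1
  rw [div_mul_eq_mul_div, mul_inv_cancel₀ (ha n).ne', one_div]

theorem model_system_eps_zero_rank_one_general (β : ℝ) (hβ : 0 < β)
    (R B : ℕ → Matrix (Fin 2) (Fin 2) ℂ) (hR : Summable fun n => ‖R n‖)
    (hB : ∀ n : ℕ, 1 ≤ n → B n = 1 + (((β / n : ℝ)) : ℂ) • !![1, 0; 0, -1] + R n)
    (x : (Fin 2 → ℂ) → ℕ → Fin 2 → ℂ)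
    (hx1 : ∀ f, x f 1 = f)
    (hx : ∀ f, ∀ n : ℕ, 1 ≤ n → x f (n + 1) = B n *ᵥ x f n) :
    ∃ L : (Fin 2 → ℂ) →ₗ[ℂ] (Fin 2 → ℂ),
      (∀ f, Tendsto (fun n : ℕ => ((n : ℝ) ^ β)⁻¹ • x f n) atTop (𝓝 (L f))) ∧
      ∃ v : Fin 2 → ℂ, ∀ f, ∃ c : ℂ, L f = c • v := by
  have hshift : ∀ f n, x f (n + 1 + 1) = B (n + 1) *ᵥ x f (n + 1) :=
    fun f n => hx f (n + 1) n.succ_pos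
  choose Φ hΦ using exists_linearMap_eq_of_eq_mulVec (x := fun f n => x f (n + 1))
    (fun n => B (n + 1)) hx1 hshift
  have hB' : ∀ n : ℕ, B (n + 1) = 1 + ((β / (n + 1) : ℝ) : ℂ) • !![1, 0; 0, -1] + R (n + 1) :=
    fun n => by simpa using hB (n + 1) n.succ_pos
  choose z hz1 hz using fun f => exists_tendsto_rpow_inv_smul_of_eq_mulVec hβ
    ((summable_nat_add_iff 1).2 hR) (s := fun n => x f (n + 1)) fun n => by rw [hshift, hB']
  have hlim : ∀ f, Tendsto (fun n : ℕ => ((n : ℝ) ^ β)⁻¹ • x f n) atTop (𝓝 (z f)) :=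
    fun f => (tendsto_add_atTop_iff_nat 1).1 (by simpa using hz f)
  let L := linearMapOfTendsto z (fun n : ℕ => (((n : ℝ) + 1) ^ β)⁻¹ • Φ n) <|
    tendsto_pi_nhds.2 fun f => by simpa [hΦ] using hz f
  refine ⟨L, hlim, Pi.single 0 1, fun f => ⟨z f 0, ?_⟩⟩
  show z f = z f 0 • Pi.single 0 1
  ext i
  fin_cases i <;> simp [hz1]

/-- Model system, `ε = 0` (diagonalized): with `B_n = I + (β/n) diag(1,-1) + R_n`, `β > 0`,
`∑ ‖R_n‖ < ∞`, all `B_n` invertible, the limit `L f = lim x_n(f)/n^β` exists for every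
initial condition `f` and `f ↦ L f` is a linear map of rank at most one. -/
theorem model_system_eps_zero_rank_one (β : ℝ) (hβ : 0 < β)
    (R B : ℕ → Matrix (Fin 2) (Fin 2) ℂ) (hR : Summable fun n => ‖R n‖)
    (hB : ∀ n : ℕ, 1 ≤ n → B n = 1 + (((β / n : ℝ)) : ℂ) • !![1, 0; 0, -1] + R n)
    (hinv : ∀ n : ℕ, IsUnit (B n))
    (x : (Fin 2 → ℂ) → ℕ → Fin 2 → ℂ)
    (hx1 : ∀ f, x f 1 = f)
    (hx : ∀ f, ∀ n : ℕ, 1 ≤ n → x f (n + 1) = B n *ᵥ x f n) :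
    ∃ L : (Fin 2 → ℂ) →ₗ[ℂ] (Fin 2 → ℂ),
      (∀ f, Tendsto (fun n : ℕ => ((n : ℝ) ^ β)⁻¹ • x f n) atTop (𝓝 (L f))) ∧
      ∃ v : Fin 2 → ℂ, ∀ f, ∃ c : ℂ, L f = c • v :=
  model_system_eps_zero_rank_one_general β hβ R B hR hB x hx1 hx
end

section
/- Let β > 0 and consider the scalar recursion x_{n+1} = (1 + β/n + r_n) x_n with x_1 = 1, where (r_n) are complex numbers with ∑ |r_n| < ∞ and 1 + β/n + r_n ≠ 0 for all n. Then lim_{n→∞} x_n / n^β exists. -/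
/-!
Write `1 + β/n + r_n = (1 + β/n)(1 + s_n)` with `s_n = r_n / (1 + β/n)`, so that `|s_n| ≤ |r_n|`.
Then `x_{n+1} = (∏_{k ≤ n} (1 + β/k)) · ∏_{k ≤ n} (1 + s_k)`. The second product converges since
`∑ |s_k| < ∞`, and the first one is `n^β / (β · GammaSeq β n)`, so by Euler's limit formula it
is asymptotic to `n^β / Γ(β + 1)`.
-/

open Filter Topology Finset

theorem prod_range_mul_prod_range_of_recursion {K : Type*} [Field K] {a r x : ℕ → K}
    (ha : ∀ n, 1 ≤ n → a n ≠ 0) (hx : ∀ n, 1 ≤ n → x (n + 1) = (a n + r n) * x n) (n : ℕ) :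
    x (n + 1) =
      (∏ k ∈ range n, a (k + 1)) * (∏ k ∈ range n, (1 + r (k + 1) / a (k + 1))) * x 1 := by
  induction n with
  | zero => simp
  | succ n ih =>
    have hfactor : a (n + 1) + r (n + 1) = a (n + 1) * (1 + r (n + 1) / a (n + 1)) := by
      field_simp [ha (n + 1) le_add_self]
    rw [hx (n + 1) le_add_self, ih, hfactor, prod_range_succ, prod_range_succ]
    ring

theorem summable_norm_div_of_one_le_norm {E : Type*} [NormedDivisionRing E] {a r : ℕ → E}
    (hr : Summable fun n => ‖r n‖) (ha : ∀ n, 1 ≤ ‖a n‖) : Summable fun n => ‖r n / a n‖ :=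
  hr.of_nonneg_of_le (fun _ => norm_nonneg _) fun n => by
    rw [norm_div]; exact div_le_self (norm_nonneg _) (ha n)

namespace Real

theorem prod_range_one_add_div_div_rpow {β : ℝ} (hβ : β ≠ 0) (n : ℕ) :
    (∏ k ∈ range n, (1 + β / (k + 1))) / (n : ℝ) ^ β = (β * GammaSeq β n)⁻¹ := by
  have hprod : ∏ k ∈ range n, (1 + β / (k + 1)) = (∏ k ∈ range n, (β + (k + 1))) / n.factorial := by
    rw [← prod_range_add_one_eq_factorial, Nat.cast_prod, ← prod_div_distrib]
    refine prod_congr rfl fun k _ => ?_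
    push_cast
    field_simp
    ring
  rcases n.eq_zero_or_pos with rfl | hn
  · simp [GammaSeq, zero_rpow hβ]
  · have : (n : ℝ) ^ β ≠ 0 := (rpow_pos_of_pos (Nat.cast_pos.mpr hn) β).ne'
    rw [hprod, GammaSeq, prod_range_succ']
    push_cast
    field_simp
    ring

theorem tendsto_prod_range_one_add_div_div_rpow {β : ℝ} (hβ : ∀ m : ℕ, β ≠ -m) :
    Tendsto (fun n : ℕ => (∏ k ∈ range n, (1 + β / (k + 1))) / ((n : ℝ) + 1) ^ β) atTop
      (𝓝 (Gamma (β + 1))⁻¹) := by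
  have hβ0 : β ≠ 0 := by simpa using hβ 0
  have hmain : Tendsto (fun n : ℕ => (∏ k ∈ range n, (1 + β / (k + 1))) / (n : ℝ) ^ β) atTop
      (𝓝 (Gamma (β + 1))⁻¹) := by
    rw [Gamma_add_one hβ0]
    simp_rw [prod_range_one_add_div_div_rpow hβ0]
    exact (tendsto_const_nhds.mul (GammaSeq_tendsto_Gamma β)).inv₀
      (mul_ne_zero hβ0 (Gamma_ne_zero hβ))
  have hratio : Tendsto (fun n : ℕ => ((n : ℝ) / (n + 1)) ^ β) atTop (𝓝 1) := by
    simpa [Function.comp_def] using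
      (continuousAt_rpow_const 1 β (Or.inl one_ne_zero)).tendsto.comp
        (tendsto_natCast_div_add_atTop (1 : ℝ))
  refine (mul_one ((Gamma (β + 1))⁻¹) ▸ hmain.mul hratio).congr' ?_
  filter_upwards [eventually_ge_atTop 1] with n hn
  have : (n : ℝ) ^ β ≠ 0 := (rpow_pos_of_pos (Nat.cast_pos.mpr hn) β).ne'
  rw [div_rpow (Nat.cast_nonneg n) (by positivity)]
  field_simp

end Real

theorem scalar_recursion_limit_general (β : ℝ) (hβ : 0 < β) (r : ℕ → ℂ)
    (hr : Summable fun n => ‖r n‖)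
    (x : ℕ → ℂ) (hx1 : x 1 = 1)
    (hx : ∀ n : ℕ, 1 ≤ n → x (n + 1) = (1 + ((β / n : ℝ) : ℂ) + r n) * x n) :
    ∃ L : ℂ, Tendsto (fun n : ℕ => x n / ((n : ℝ) ^ β : ℝ)) atTop (𝓝 L) := by
  set a : ℕ → ℂ := fun n => ((1 + β / n : ℝ) : ℂ)
  have ha : ∀ n, 1 ≤ ‖a n‖ := fun n => by
    rw [Complex.norm_real, Real.norm_of_nonneg (by positivity)]
    exact le_add_of_nonneg_right (by positivity)
  have hxa : ∀ n, 1 ≤ n → x (n + 1) = (a n + r n) * x n := fun n hn => by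
    rw [hx n hn]; simp only [a, Complex.ofReal_add, Complex.ofReal_one]
  have hmult : Multipliable fun k => 1 + r (k + 1) / a (k + 1) :=
    multipliable_one_add_of_summable ((summable_nat_add_iff 1).mpr
      (summable_norm_div_of_one_le_norm hr ha))
  have hβ' : ∀ m : ℕ, β ≠ -m := fun m => by linarith [(Nat.cast_nonneg m : (0 : ℝ) ≤ m)]
  refine ⟨(Real.Gamma (β + 1))⁻¹ * ∏' k, (1 + r (k + 1) / a (k + 1)), ?_⟩
  rw [← tendsto_add_atTop_iff_nat 1]
  refine ((Complex.continuous_ofReal.tendsto _).comp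
    (Real.tendsto_prod_range_one_add_div_div_rpow hβ')).mul hmult.tendsto_prod_tprod_nat
    |>.congr fun n => ?_
  have ha0 : ∀ n, 1 ≤ n → a n ≠ 0 := fun n _ => norm_pos_iff.mp (one_pos.trans_le (ha n))
  rw [prod_range_mul_prod_range_of_recursion ha0 hxa n, hx1]
  push_cast [a, Function.comp_apply]
  ring

/-- Scalar model recursion: if `x_1 = 1`, `x_{n+1} = (1 + β/n + r_n) x_n` with `β > 0`,
`∑ |r_n| < ∞` and no factor vanishing, then `x_n / n^β` converges. -/
theorem scalar_recursion_limit (β : ℝ) (hβ : 0 < β) (r : ℕ → ℂ)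
    (hr : Summable fun n => ‖r n‖)
    (hne : ∀ n : ℕ, 1 ≤ n → (1 + (β / n : ℝ) + r n : ℂ) ≠ 0)
    (x : ℕ → ℂ) (hx1 : x 1 = 1)
    (hx : ∀ n : ℕ, 1 ≤ n → x (n + 1) = (1 + ((β / n : ℝ) : ℂ) + r n) * x n) :
    ∃ L : ℂ, Tendsto (fun n : ℕ => x n / ((n : ℝ) ^ β : ℝ)) atTop (𝓝 L) :=
  scalar_recursion_limit_general β hβ r hr x hx1 hx
end
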